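/- In the complete-randomization setting with N ≥ 3, let Q_U ⊆ {1,…,Q} be a set of arms with N_q = 1 for every q ∈ Q_U, and let 𝒢 be a fixed partition of Q_U into groups g of size |g| ≥ 2. For q ∈ Q_U write Y_q for the observed outcome in arm q (Y_q = Y_i(q) for the unique i with Z_i = q), Ŷ_g = |g|^{-1} ∑_{q∈g} Y_q, Ȳ_g = |g|^{-1} ∑_{q∈g} Ȳ(q), μ_g = (1 − 2/N)^{-1}(1 − 1/|g|)^{-2}, and V̂(q,q) = μ_g (Y_q − Ŷ_g)² for q ∈ g. Assume S(q,q) > 0 for all q ∈ Q_U, and let ρ_g be the largest eigenvalue of the correlation submatrix ( S(q,q')/√(S(q,q)S(q',q')) )_{q,q'∈g}. Then: (a) E[Ŷ_g] = Ȳ_g for every g ∈ 𝒢; (b) if N − ρ_g − (|g|−1) ≥ 0 for a group g, then for every q ∈ g, E[V̂(q,q)] ≥ S(q,q) + Ω(q,q) + μ_g (Ȳ(q) − Ȳ_g)², where Ω(q,q) = μ_g |g|^{-2} (1 − ρ_g/N − (|g|−1)/N) ∑_{q'∈g, q'≠q} S(q',q') ≥ 0. -/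

import Mathlib

open Finset Matrix MeasureTheory ProbabilityTheory
open scoped Classical

noncomputable section

/-- Expectation with respect to the uniform distribution on the symmetric group of
permutations of `{1,…,N}`. -/
def pexp {N : ℕ} (f : Equiv.Perm (Fin N) → ℝ) : ℝ :=
  (∑ π : Equiv.Perm (Fin N), f π) / (Nat.factorial N : ℝ)

/-- Probability with respect to the uniform distribution on permutations of `{1,…,N}`. -/
def pprob {N : ℕ} (p : Equiv.Perm (Fin N) → Prop) : ℝ :=
  pexp (fun π => if p π then (1 : ℝ) else 0)

/-- Mean potential outcome `Ȳ(q)`. -/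
def Ybar {N Q : ℕ} (Y : Fin N → Fin Q → ℝ) (q : Fin Q) : ℝ :=
  (∑ i, Y i q) / (N : ℝ)

/-- Finite-population covariance `S(q,q')`. -/
def Svar {N Q : ℕ} (Y : Fin N → Fin Q → ℝ) (q q' : Fin Q) : ℝ :=
  (∑ i, (Y i q - Ybar Y q) * (Y i q' - Ybar Y q')) / ((N : ℝ) - 1)

/-- Maximum absolute deviation `M_N(q)`. -/
def MNdev {N Q : ℕ} (Y : Fin N → Fin Q → ℝ) (q : Fin Q) : ℝ :=
  ⨆ i : Fin N, |Y i q - Ybar Y q|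

/-- Sample mean `Ŷ_q` in arm `q` under the assignment `Z_i = z(π(i))`. -/
def Yhat {N Q : ℕ} (Y : Fin N → Fin Q → ℝ) (z : Fin N → Fin Q) (Nq : Fin Q → ℕ)
    (π : Equiv.Perm (Fin N)) (q : Fin Q) : ℝ :=
  (∑ i, if z (π i) = q then Y i q else 0) / (Nq q : ℝ)

/-- The covariance matrix `V_Ŷ = diag(N_q⁻¹ S(q,q)) − N⁻¹ S`. -/
def VYmat {N Q : ℕ} (Y : Fin N → Fin Q → ℝ) (Nq : Fin Q → ℕ) :
    Matrix (Fin Q) (Fin Q) ℝ :=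
  Matrix.of fun q q' =>
    (if q = q' then Svar Y q q / (Nq q : ℝ) else 0) - Svar Y q q' / (N : ℝ)

/-- Smallest eigenvalue of a (symmetric) matrix, via the Rayleigh quotient. -/
def lamMin {n : Type*} [Fintype n] (A : Matrix n n ℝ) : ℝ :=
  ⨅ x : {x : n → ℝ // (∑ i, x i ^ 2) = 1}, x.1 ⬝ᵥ A.mulVec x.1

/-- Largest eigenvalue of a (symmetric) matrix, via the Rayleigh quotient. -/
def lamMax {n : Type*} [Fintype n] (A : Matrix n n ℝ) : ℝ :=
  ⨆ x : {x : n → ℝ // (∑ i, x i ^ 2) = 1}, x.1 ⬝ᵥ A.mulVec x.1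

/-- Standard normal cumulative distribution function. -/
def stdNormalCDF (t : ℝ) : ℝ :=
  ∫ x in Set.Iic t, (Real.sqrt (2 * Real.pi))⁻¹ * Real.exp (-(x ^ 2) / 2)

/-- The standard Gaussian measure on `ℝ^H`. -/
def gaussianPi (H : ℕ) : Measure (Fin H → ℝ) :=
  Measure.pi fun _ : Fin H => gaussianReal 0 1

/-- Condition 1 with parameter `σF`:
`Fᵀ diag(N_q⁻¹ S(q,q)) F ⪯ σF² Fᵀ V_Ŷ F` in the Loewner order. -/
def CondOne {N Q H : ℕ} (Y : Fin N → Fin Q → ℝ) (Nq : Fin Q → ℕ)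
    (F : Matrix (Fin Q) (Fin H) ℝ) (σF : ℝ) : Prop :=
  (σF ^ 2 • (Fᵀ * VYmat Y Nq * F) -
    Fᵀ * Matrix.diagonal (fun q => Svar Y q q / (Nq q : ℝ)) * F).PosSemidef

/-- Condition 2 (proper contrast) with parameters `c, c'`. -/
def CondTwo {Q H : ℕ} (F : Matrix (Fin Q) (Fin H) ℝ) (c c' : ℝ) : Prop :=
  (∀ q h, |F q h| ≤ c / (Q : ℝ)) ∧ c' / (Q : ℝ) ≤ lamMin (Fᵀ * F)

/-- The standardized estimator `γ̃ = V_γ̂^{-1/2}(γ̂ − γ)`. -/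
def tgam {N Q H : ℕ} (Y : Fin N → Fin Q → ℝ) (z : Fin N → Fin Q) (Nq : Fin Q → ℕ)
    (F : Matrix (Fin Q) (Fin H) ℝ) (hpd : (Fᵀ * VYmat Y Nq * F).PosDef)
    (π : Equiv.Perm (Fin N)) : Fin H → ℝ :=
  (((hpd.posSemidef.isHermitian.eigenvectorUnitary : Matrix (Fin H) (Fin H) ℝ) *
      Matrix.diagonal (Real.sqrt ∘ hpd.posSemidef.isHermitian.eigenvalues) *
      (star hpd.posSemidef.isHermitian.eigenvectorUnitary : Matrix (Fin H) (Fin H) ℝ))⁻¹).mulVec (Fᵀ.mulVec (Yhat Y z Nq π) - Fᵀ.mulVec (Ybar Y))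

/-- Observed outcome `Y_q` in an unreplicated arm `q` (the sum over the unique unit
assigned to arm `q` when `N_q = 1`). -/
def Yobs {N Q : ℕ} (Y : Fin N → Fin Q → ℝ) (z : Fin N → Fin Q)
    (π : Equiv.Perm (Fin N)) (q : Fin Q) : ℝ :=
  ∑ i, if z (π i) = q then Y i q else 0

/-- Group-specific average `Ŷ_g` of the observed outcomes. -/
def Yhatg {N Q : ℕ} (Y : Fin N → Fin Q → ℝ) (z : Fin N → Fin Q)
    (π : Equiv.Perm (Fin N)) (g : Finset (Fin Q)) : ℝ :=
  (∑ q ∈ g, Yobs Y z π q) / (g.card : ℝ)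

/-- Group-specific average `Ȳ_g` of the mean potential outcomes. -/
def Ybarg {N Q : ℕ} (Y : Fin N → Fin Q → ℝ) (g : Finset (Fin Q)) : ℝ :=
  (∑ q ∈ g, Ybar Y q) / (g.card : ℝ)

/-- Correction factor `μ_g = (1 − 2/N)⁻¹ (1 − 1/|g|)⁻²`. -/
def muG {Q : ℕ} (N : ℕ) (g : Finset (Fin Q)) : ℝ :=
  (1 - 2 / (N : ℝ))⁻¹ * ((1 - (g.card : ℝ)⁻¹) ^ 2)⁻¹

/-- `ρ_g`: largest eigenvalue of the correlation submatrix of the potential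
outcomes within the group `g`. -/
def rhoG {N Q : ℕ} (Y : Fin N → Fin Q → ℝ) (g : Finset (Fin Q)) : ℝ :=
  lamMax (Matrix.of fun a b : {q : Fin Q // q ∈ g} =>
    Svar Y a.1 b.1 / Real.sqrt (Svar Y a.1 a.1 * Svar Y b.1 b.1))

/-! Each unreplicated arm `q` is observed on the unit `π⁻¹ u_q`, where `u_q` is the only unit with
`z u_q = q`, so under a uniform permutation the observed outcomes are a draw without replacement:
`E Y_a = Ȳ(a)` and `E Y_a Y_b = Ȳ(a) Ȳ(b) + [a = b] S(a,a) - S(a,b)/N`. This gives (a), and,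
writing `Y_q - Ŷ_g = ∑_{a ∈ g} c_a Y_a` with the contrast `c = e_q - 1_g/|g|`,
`E (Y_q - Ŷ_g)² = (Ȳ(q) - Ȳ_g)² + ∑_a c_a² S(a,a) - cᵀ S c / N`.
By `(x - y)² ≤ 2x² + 2y²`, `cᵀ S c ≤ 2 (1 - 1/|g|)² S(q,q) + 2 |g|⁻² 1ᵀ S_{g∖q} 1`, and
`1ᵀ S_{g∖q} 1` is at most `ρ_g ∑_{g∖q} S(a,a)` (the Rayleigh quotient of the correlation matrix
at `(√S(a,a))_a`) as well as `(|g| - 1) ∑_{g∖q} S(a,a)` (Cauchy–Schwarz). Averaging the two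
bounds and multiplying by `μ_g`, which cancels `(1 - 1/|g|)² (1 - 2/N)`, gives (b). -/

section UniformPermutation

variable {N : ℕ}

lemma pexp_sum {ι : Type*} (s : Finset ι) (f : ι → Equiv.Perm (Fin N) → ℝ) :
    pexp (fun π => ∑ i ∈ s, f i π) = ∑ i ∈ s, pexp (f i) := by
  rw [pexp, Finset.sum_comm, Finset.sum_div]
  rfl

lemma pexp_const (c : ℝ) : pexp (fun _ : Equiv.Perm (Fin N) => c) = c := by
  rw [pexp, Finset.sum_const, Finset.card_univ, Fintype.card_perm, Fintype.card_fin, nsmul_eq_mul,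
    mul_div_cancel_left₀ _ (by positivity)]

lemma pexp_const_mul (r : ℝ) (f : Equiv.Perm (Fin N) → ℝ) :
    pexp (fun π => r * f π) = r * pexp f := by
  rw [pexp, pexp, ← Finset.mul_sum, mul_div_assoc]

lemma pexp_div_const (f : Equiv.Perm (Fin N) → ℝ) (c : ℝ) :
    pexp (fun π => f π / c) = pexp f / c := by
  rw [pexp, pexp, ← Finset.sum_div, div_right_comm]

lemma pexp_comp_mul_right (σ : Equiv.Perm (Fin N)) (f : Equiv.Perm (Fin N) → ℝ) :
    pexp (fun π => f (π * σ)) = pexp f := by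
  rw [pexp, pexp]
  congr 1
  exact Equiv.sum_comp (Equiv.mulRight σ) f

lemma pexp_comp_inv (f : Equiv.Perm (Fin N) → ℝ) :
    pexp (fun π => f π⁻¹) = pexp f := by
  rw [pexp, pexp]
  congr 1
  exact Equiv.sum_comp (Equiv.inv _) f

lemma pexp_apply (G : Fin N → ℝ) (a : Fin N) :
    pexp (fun π => G (π a)) = (∑ i, G i) / N := by
  have hconst : ∀ b, pexp (fun π => G (π b)) = pexp (fun π => G (π a)) := fun b => by
    simpa using pexp_comp_mul_right (Equiv.swap a b) (fun π => G (π a))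
  have htotal : ∑ b, pexp (fun π => G (π b)) = ∑ i, G i := by
    rw [← pexp_sum]
    simp only [Equiv.sum_comp, pexp_const]
  simp only [hconst, Finset.sum_const, Finset.card_univ, Fintype.card_fin, nsmul_eq_mul] at htotal
  rw [← htotal, mul_div_cancel_left₀ _ (by simpa using a.pos.ne')]

lemma pexp_apply_mul_apply (G : Fin N → Fin N → ℝ) {a b : Fin N} (hab : a ≠ b) :
    pexp (fun π => G (π a) (π b)) = ((∑ i, ∑ j, G i j) - ∑ i, G i i) / (N * (N - 1)) := by
  set T : Fin N → Fin N → ℝ := fun a' b' => pexp (fun π => G (π a') (π b'))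
  have hconst : ∀ a' b', a' ≠ b' → T a' b' = T a b := fun a' b' h => by
    obtain ⟨σ, hσa, hσb⟩ :=
      MulAction.is_two_pretransitive_iff.mp (Equiv.Perm.isMultiplyPretransitive (Fin N) 2) hab h
    rw [← hσa, ← hσb]
    exact pexp_comp_mul_right σ (fun π => G (π a) (π b))
  have hrow : ∀ a', ∑ b', T a' b' = N * T a b + (T a' a' - T a b) := fun a' => by
    have : ∀ b', T a' b' = T a b + if b' = a' then T a' a' - T a b else 0 := fun b' => by
      split_ifs with h
      · rw [h]; ring
      · rw [hconst a' b' (Ne.symm h), add_zero]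
    rw [Finset.sum_congr rfl fun b' _ => this b', Finset.sum_add_distrib, Finset.sum_ite_eq']
    simp
  have hdiag : ∑ a', T a' a' = ∑ i, G i i := by
    rw [← pexp_sum, funext fun π : Equiv.Perm (Fin N) => Equiv.sum_comp π (fun i => G i i),
      pexp_const]
  have htotal : ∑ a', ∑ b', T a' b' = ∑ i, ∑ j, G i j := by
    have hπ : ∀ π : Equiv.Perm (Fin N), ∑ a', ∑ b', G (π a') (π b') = ∑ i, ∑ j, G i j :=
      fun π => by simp only [Equiv.sum_comp π (G _), Equiv.sum_comp π (fun i => ∑ j, G i j)]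
    simp only [T, ← pexp_sum, hπ, pexp_const]
  have hN : (N : ℝ) * (N - 1) ≠ 0 := by
    have : (2 : ℝ) ≤ N := by exact_mod_cast (show 2 ≤ N by omega)
    exact mul_ne_zero (by linarith) (by linarith)
  rw [eq_div_iff hN, ← htotal, ← hdiag]
  simp only [hrow, Finset.sum_add_distrib, Finset.sum_sub_distrib, Finset.sum_const,
    Finset.card_univ, Fintype.card_fin, nsmul_eq_mul]
  ring

end UniformPermutation

section Rayleigh

variable {n : Type*} [Fintype n] (A : Matrix n n ℝ)

lemma bddAbove_rayleigh :
    BddAbove (Set.range fun x : {x : n → ℝ // ∑ i, x i ^ 2 = 1} => x.1 ⬝ᵥ A *ᵥ x.1) := by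
  refine ⟨∑ i, ∑ j, |A i j|, Set.forall_mem_range.2 fun ⟨x, hx⟩ => ?_⟩
  have hle : ∀ i, |x i| ≤ 1 := fun i => by
    rw [← sq_le_one_iff_abs_le_one, ← hx]
    exact Finset.single_le_sum (fun j _ => sq_nonneg (x j)) (Finset.mem_univ i)
  simp only [dotProduct, mulVec, Finset.mul_sum]
  refine Finset.sum_le_sum fun i _ => Finset.sum_le_sum fun j _ => ?_
  calc x i * (A i j * x j) ≤ |x i| * (|A i j| * |x j|) := by
        rw [← abs_mul, ← abs_mul]
        exact le_abs_self _
    _ ≤ 1 * (|A i j| * 1) := by gcongr <;> exact hle _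
    _ = |A i j| := by ring

lemma dotProduct_mulVec_le_lamMax_mul (x : n → ℝ) :
    x ⬝ᵥ A *ᵥ x ≤ lamMax A * ∑ i, x i ^ 2 := by
  obtain ⟨r, hr0, hr2⟩ : ∃ r : ℝ, 0 ≤ r ∧ r ^ 2 = ∑ i, x i ^ 2 :=
    ⟨_, Real.sqrt_nonneg _, Real.sq_sqrt (by positivity)⟩
  rcases hr0.eq_or_lt with hr | hr
  · have hx : x = 0 := by
      ext i
      have := Finset.sum_eq_zero_iff_of_nonneg (fun j _ => sq_nonneg (x j)) |>.mp
        (by rw [← hr2, ← hr, sq, mul_zero]) i (Finset.mem_univ i)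
      simpa using this
    simp [hx]
  · set u := r⁻¹ • x
    have hu : ∑ i, u i ^ 2 = 1 := by
      simp only [u, Pi.smul_apply, smul_eq_mul, mul_pow, ← Finset.mul_sum, ← hr2]
      field_simp
    have hxu : x = r • u := by simp [u, smul_smul, mul_inv_cancel₀ hr.ne']
    have hle : u ⬝ᵥ A *ᵥ u ≤ lamMax A := le_ciSup (bddAbove_rayleigh A) ⟨u, hu⟩
    calc x ⬝ᵥ A *ᵥ x = r ^ 2 * (u ⬝ᵥ A *ᵥ u) := by
          rw [hxu, mulVec_smul, dotProduct_smul, smul_dotProduct]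
          simp only [smul_eq_mul]
          ring
      _ ≤ r ^ 2 * lamMax A := by gcongr
      _ = lamMax A * ∑ i, x i ^ 2 := by rw [hr2, mul_comm]

end Rayleigh

section FinitePopulation

variable {N Q : ℕ} (Y : Fin N → Fin Q → ℝ)

lemma sum_eq_mul_Ybar (q : Fin Q) : ∑ i, Y i q = N * Ybar Y q := by
  rcases N.eq_zero_or_pos with rfl | hN
  · simp
  · rw [Ybar, mul_div_cancel₀ _ (by positivity)]

lemma sum_mul_eq_Svar_add (hN : 2 ≤ N) (a b : Fin Q) :
    ∑ i, Y i a * Y i b = (N - 1) * Svar Y a b + N * (Ybar Y a * Ybar Y b) := by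
  have hN1 : (N : ℝ) - 1 ≠ 0 := by
    have : (2 : ℝ) ≤ N := by exact_mod_cast hN
    linarith
  have hexpand : ∀ i, Y i a * Y i b = (Y i a - Ybar Y a) * (Y i b - Ybar Y b)
      + Ybar Y b * Y i a + Ybar Y a * Y i b - Ybar Y a * Ybar Y b := fun i => by ring
  simp only [hexpand, Finset.sum_add_distrib, Finset.sum_sub_distrib, ← Finset.mul_sum,
    sum_eq_mul_Ybar, Finset.sum_const, Finset.card_univ, Fintype.card_fin, nsmul_eq_mul, Svar,
    mul_div_cancel₀ _ hN1]
  ring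

def covQuad (t : Finset (Fin Q)) (c : Fin Q → ℝ) : ℝ :=
  ∑ a ∈ t, ∑ b ∈ t, c a * c b * Svar Y a b

lemma covQuad_eq_sum_sq (t : Finset (Fin Q)) (c : Fin Q → ℝ) :
    covQuad Y t c = (∑ i, (∑ a ∈ t, c a * (Y i a - Ybar Y a)) ^ 2) / (N - 1) := by
  have hsq : ∀ i, (∑ a ∈ t, c a * (Y i a - Ybar Y a)) ^ 2 =
      ∑ a ∈ t, ∑ b ∈ t, c a * c b * ((Y i a - Ybar Y a) * (Y i b - Ybar Y b)) := fun i => by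
    rw [sq, Finset.sum_mul_sum]
    exact Finset.sum_congr rfl fun a _ => Finset.sum_congr rfl fun b _ => by ring
  simp only [covQuad, Svar, mul_div_assoc', ← Finset.sum_div, Finset.mul_sum, hsq]
  congr 1
  rw [Finset.sum_comm (s := univ)]
  exact Finset.sum_congr rfl fun a _ => Finset.sum_comm

lemma covQuad_one_le_card_mul (hN : 1 ≤ N) (t : Finset (Fin Q)) :
    covQuad Y t 1 ≤ t.card * ∑ a ∈ t, Svar Y a a := by
  have hN1 : (0 : ℝ) ≤ N - 1 := by
    have : (1 : ℝ) ≤ N := by exact_mod_cast hN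
    linarith
  simp only [covQuad_eq_sum_sq, Pi.one_apply, one_mul, Svar, ← sq, ← Finset.sum_div]
  rw [Finset.sum_comm (s := t), mul_div_assoc', Finset.mul_sum]
  gcongr
  exact sq_sum_le_card_mul_sum_sq

lemma covQuad_one_le_rhoG_mul {g t : Finset (Fin Q)} (htg : t ⊆ g)
    (hS : ∀ a ∈ t, 0 < Svar Y a a) :
    covQuad Y t 1 ≤ rhoG Y g * ∑ a ∈ t, Svar Y a a := by
  have hterm : ∀ a ∈ t, ∀ b ∈ t,
      √(Svar Y a a) * (Svar Y a b / √(Svar Y a a * Svar Y b b) * √(Svar Y b b)) = Svar Y a b := by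
    intro a ha b hb
    have := Real.sqrt_pos.mpr (hS a ha)
    have := Real.sqrt_pos.mpr (hS b hb)
    rw [Real.sqrt_mul (hS a ha).le]
    field_simp
  let x : {q // q ∈ g} → ℝ := fun a => if a.1 ∈ t then √(Svar Y a.1 a.1) else 0
  have hx : ∑ a, x a ^ 2 = ∑ a ∈ t, Svar Y a a := by
    simp only [x, ite_pow, zero_pow two_ne_zero]
    rw [Finset.sum_coe_sort g (fun a => if a ∈ t then √(Svar Y a a) ^ 2 else 0),
      Finset.sum_ite_mem, Finset.inter_eq_right.mpr htg]
    exact Finset.sum_congr rfl fun a ha => Real.sq_sqrt (hS a ha).le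
  have hform : x ⬝ᵥ (of fun a b : {q // q ∈ g} =>
      Svar Y a.1 b.1 / √(Svar Y a.1 a.1 * Svar Y b.1 b.1)) *ᵥ x = covQuad Y t 1 := by
    let f : Fin Q → Fin Q → ℝ := fun a b => if a ∈ t then if b ∈ t then
      √(Svar Y a a) * (Svar Y a b / √(Svar Y a a * Svar Y b b) * √(Svar Y b b)) else 0 else 0
    have hf : x ⬝ᵥ (of fun a b : {q // q ∈ g} =>
        Svar Y a.1 b.1 / √(Svar Y a.1 a.1 * Svar Y b.1 b.1)) *ᵥ x = ∑ a : g, ∑ b : g, f a b := by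
      simp only [dotProduct, mulVec, of_apply, Finset.mul_sum, x, f]
      refine Finset.sum_congr rfl fun a _ => Finset.sum_congr rfl fun b _ => ?_
      split_ifs <;> simp
    rw [hf, Finset.sum_coe_sort g (fun a => ∑ b : g, f a b)]
    simp only [fun a => Finset.sum_coe_sort g (f a), covQuad, Pi.one_apply, one_mul]
    rw [← Finset.sum_subset htg fun a _ ha => Finset.sum_eq_zero fun b _ => if_neg ha]
    refine Finset.sum_congr rfl fun a ha => ?_
    rw [← Finset.sum_subset htg fun b _ hb => by simp [hb]]
    exact Finset.sum_congr rfl fun b hb => by simp [ha, hb, hterm a ha b hb]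
  rw [← hform, ← hx]
  exact dotProduct_mulVec_le_lamMax_mul _ x

end FinitePopulation

section ObservedOutcomes

variable {N Q : ℕ} (Y : Fin N → Fin Q → ℝ) (z : Fin N → Fin Q)

lemma Yobs_eq_apply_inv {q : Fin Q} {u : Fin N} (hu : univ.filter (fun i => z i = q) = {u})
    (π : Equiv.Perm (Fin N)) : Yobs Y z π q = Y (π⁻¹ u) q := by
  have key : ∀ i, z (π i) = q ↔ i = π⁻¹ u := fun i => by
    rw [Equiv.Perm.eq_inv_iff_eq, ← Finset.mem_singleton (a := u), ← hu]
    simp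
  simp only [Yobs, key, Finset.sum_ite_eq', Finset.mem_univ, if_true]

lemma pexp_Yobs {q : Fin Q} (hq : (univ.filter fun i => z i = q).card = 1) :
    pexp (fun π => Yobs Y z π q) = Ybar Y q := by
  obtain ⟨u, hu⟩ := Finset.card_eq_one.mp hq
  simp only [Yobs_eq_apply_inv Y z hu]
  rw [pexp_comp_inv (fun π => Y (π u) q), pexp_apply (fun i => Y i q), Ybar]

lemma pexp_Yhatg {g : Finset (Fin Q)} (hg : ∀ a ∈ g, (univ.filter fun i => z i = a).card = 1) :
    pexp (fun π => Yhatg Y z π g) = Ybarg Y g := by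
  simp only [Yhatg, pexp_div_const, pexp_sum, Ybarg]
  rw [Finset.sum_congr rfl fun a ha => pexp_Yobs Y z (hg a ha)]

lemma pexp_Yobs_mul_Yobs (hN : 2 ≤ N) {a b : Fin Q}
    (ha : (univ.filter fun i => z i = a).card = 1) (hb : (univ.filter fun i => z i = b).card = 1) :
    pexp (fun π => Yobs Y z π a * Yobs Y z π b) =
      Ybar Y a * Ybar Y b + ((if a = b then Svar Y a a else 0) - Svar Y a b / N) := by
  obtain ⟨u, hu⟩ := Finset.card_eq_one.mp ha
  obtain ⟨v, hv⟩ := Finset.card_eq_one.mp hb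
  have hN0 : (N : ℝ) ≠ 0 := by positivity
  have hN1 : (N : ℝ) - 1 ≠ 0 := by
    have : (2 : ℝ) ≤ N := by exact_mod_cast hN
    linarith
  simp only [Yobs_eq_apply_inv Y z hu, Yobs_eq_apply_inv Y z hv]
  rw [pexp_comp_inv (fun π => Y (π u) a * Y (π v) b)]
  split_ifs with hab
  · subst hab
    obtain rfl : u = v := Finset.singleton_inj.mp (hu.symm.trans hv)
    rw [pexp_apply (fun i => Y i a * Y i a), sum_mul_eq_Svar_add Y hN]
    field_simp
    ring
  · have huv : u ≠ v := fun h => hab <| by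
      have hzu : z u = a := by simpa using hu.symm.subset (Finset.mem_singleton_self u)
      have hzv : z v = b := by simpa using hv.symm.subset (Finset.mem_singleton_self v)
      rw [← hzu, ← hzv, h]
    rw [pexp_apply_mul_apply (fun i j => Y i a * Y j b) huv, sum_mul_eq_Svar_add Y hN]
    simp only [← Finset.mul_sum, ← Finset.sum_mul, sum_eq_mul_Ybar]
    field_simp
    ring

lemma pexp_sq_sum_mul_Yobs (hN : 2 ≤ N) {t : Finset (Fin Q)}
    (ht : ∀ a ∈ t, (univ.filter fun i => z i = a).card = 1) (c : Fin Q → ℝ) :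
    pexp (fun π => (∑ a ∈ t, c a * Yobs Y z π a) ^ 2) =
      (∑ a ∈ t, c a * Ybar Y a) ^ 2 + ∑ a ∈ t, c a ^ 2 * Svar Y a a - covQuad Y t c / N := by
  have hsq : ∀ π, (∑ a ∈ t, c a * Yobs Y z π a) ^ 2 =
      ∑ a ∈ t, ∑ b ∈ t, c a * c b * (Yobs Y z π a * Yobs Y z π b) := fun π => by
    rw [sq, Finset.sum_mul_sum]
    exact Finset.sum_congr rfl fun a _ => Finset.sum_congr rfl fun b _ => by ring
  simp only [hsq, pexp_sum, pexp_const_mul]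
  rw [Finset.sum_congr rfl fun a ha => Finset.sum_congr rfl fun b hb => by
    rw [pexp_Yobs_mul_Yobs Y z hN (ht a ha) (ht b hb)]]
  have hmean : ∀ a b, c a * c b * (Ybar Y a * Ybar Y b) = c a * Ybar Y a * (c b * Ybar Y b) :=
    fun _ _ => by ring
  simp only [covQuad, sq, Finset.sum_mul_sum, mul_add, mul_sub, mul_ite, mul_zero, hmean,
    Finset.sum_add_distrib, Finset.sum_sub_distrib, Finset.sum_ite_eq, Finset.sum_ite_mem,
    Finset.inter_self, Finset.sum_div, mul_div_assoc']
  ring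

end ObservedOutcomes

section GroupDeviation

variable {Q : ℕ} {g : Finset (Fin Q)} {q : Fin Q}

def deviationContrast (g : Finset (Fin Q)) (q a : Fin Q) : ℝ :=
  (if a = q then 1 else 0) - (g.card : ℝ)⁻¹

lemma sum_deviationContrast_mul (hq : q ∈ g) (F : Fin Q → ℝ) :
    ∑ a ∈ g, deviationContrast g q a * F a = F q - (∑ a ∈ g, F a) / g.card := by
  simp only [deviationContrast, sub_mul, ite_mul, one_mul, zero_mul, Finset.sum_sub_distrib,
    Finset.sum_ite_eq', if_pos hq, inv_mul_eq_div, Finset.sum_div]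

lemma sum_deviationContrast_sq_mul (hq : q ∈ g) (F : Fin Q → ℝ) :
    ∑ a ∈ g, deviationContrast g q a ^ 2 * F a =
      (1 - (g.card : ℝ)⁻¹) ^ 2 * F q + (g.card : ℝ)⁻¹ ^ 2 * ∑ a ∈ g.erase q, F a := by
  rw [← Finset.add_sum_erase _ _ hq, Finset.mul_sum]
  congr 1
  · simp [deviationContrast]
  · exact Finset.sum_congr rfl fun a ha => by simp [deviationContrast, Finset.ne_of_mem_erase ha]

variable {N : ℕ} (Y : Fin N → Fin Q → ℝ)

lemma covQuad_deviationContrast_le (hN : 1 ≤ N) (hq : q ∈ g) :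
    covQuad Y g (deviationContrast g q) ≤
      2 * (1 - (g.card : ℝ)⁻¹) ^ 2 * Svar Y q q +
        2 * (g.card : ℝ)⁻¹ ^ 2 * covQuad Y (g.erase q) 1 := by
  have hN1 : (0 : ℝ) ≤ N - 1 := by
    have : (1 : ℝ) ≤ N := by exact_mod_cast hN
    linarith
  set k : ℝ := (g.card : ℝ)
  have hsplit : ∀ i, ∑ a ∈ g, deviationContrast g q a * (Y i a - Ybar Y a) =
      (1 - k⁻¹) * (Y i q - Ybar Y q) - k⁻¹ * ∑ a ∈ g.erase q, (Y i a - Ybar Y a) := fun i => by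
    rw [sum_deviationContrast_mul hq, ← Finset.add_sum_erase _ _ hq]
    ring
  have hpar : ∀ x y : ℝ, (x - y) ^ 2 ≤ 2 * x ^ 2 + 2 * y ^ 2 := fun x y => by
    nlinarith [sq_nonneg (x + y)]
  simp only [covQuad_eq_sum_sq, Svar, Pi.one_apply, one_mul]
  rw [mul_div_assoc', mul_div_assoc', ← add_div]
  gcongr
  rw [Finset.mul_sum, Finset.mul_sum, ← Finset.sum_add_distrib]
  refine Finset.sum_le_sum fun i _ => ?_
  rw [hsplit]
  exact (hpar _ _).trans (le_of_eq (by ring))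

lemma covQuad_deviationContrast_le_rhoG (hN : 1 ≤ N) (hq : q ∈ g)
    (hS : ∀ a ∈ g.erase q, 0 < Svar Y a a) :
    covQuad Y g (deviationContrast g q) ≤
      2 * (1 - (g.card : ℝ)⁻¹) ^ 2 * Svar Y q q +
        (g.card : ℝ)⁻¹ ^ 2 * (rhoG Y g + (g.card - 1)) * ∑ a ∈ g.erase q, Svar Y a a := by
  have hρ := covQuad_one_le_rhoG_mul Y (Finset.erase_subset q g) hS
  have hcard := covQuad_one_le_card_mul Y hN (g.erase q)
  rw [Finset.card_erase_of_mem hq, Nat.cast_pred (Finset.card_pos.mpr ⟨q, hq⟩)] at hcard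
  have htwice : 2 * covQuad Y (g.erase q) 1 ≤
      (rhoG Y g + (g.card - 1)) * ∑ a ∈ g.erase q, Svar Y a a := by
    linarith
  have := mul_le_mul_of_nonneg_left htwice (sq_nonneg (g.card : ℝ)⁻¹)
  linarith [covQuad_deviationContrast_le Y hN hq]

lemma pexp_sq_Yobs_sub_Yhatg (z : Fin N → Fin Q) (hN : 2 ≤ N)
    (hg : ∀ a ∈ g, (univ.filter fun i => z i = a).card = 1) (hq : q ∈ g) :
    pexp (fun π => (Yobs Y z π q - Yhatg Y z π g) ^ 2) =
      (Ybar Y q - Ybarg Y g) ^ 2 + ((1 - (g.card : ℝ)⁻¹) ^ 2 * Svar Y q q +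
        (g.card : ℝ)⁻¹ ^ 2 * ∑ a ∈ g.erase q, Svar Y a a) -
        covQuad Y g (deviationContrast g q) / N := by
  simp only [Yhatg, Ybarg, ← sum_deviationContrast_mul hq]
  rw [pexp_sq_sum_mul_Yobs Y z hN hg, sum_deviationContrast_sq_mul hq]

end GroupDeviation

lemma muG_pos {Q N : ℕ} {g : Finset (Fin Q)} (hN : 3 ≤ N) (hg : 2 ≤ g.card) : 0 < muG N g := by
  have hN' : (3 : ℝ) ≤ N := by exact_mod_cast hN
  have hg' : (2 : ℝ) ≤ g.card := by exact_mod_cast hg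
  have h1 : 0 < 1 - 2 / (N : ℝ) := by rw [sub_pos, div_lt_one (by linarith)]; linarith
  have h2 : 0 < 1 - (g.card : ℝ)⁻¹ := by rw [sub_pos, inv_lt_one₀ (by linarith)]; linarith
  unfold muG
  positivity

lemma muG_mul_eq_one {Q N : ℕ} {g : Finset (Fin Q)} (hN : 3 ≤ N) (hg : 2 ≤ g.card) :
    muG N g * ((1 - (g.card : ℝ)⁻¹) ^ 2 * (1 - 2 / N)) = 1 := by
  have hN' : (3 : ℝ) ≤ N := by exact_mod_cast hN
  have hg' : (2 : ℝ) ≤ g.card := by exact_mod_cast hg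
  have h1 : (N : ℝ) - 2 ≠ 0 := by linarith
  have h2 : (g.card : ℝ) - 1 ≠ 0 := by linarith
  unfold muG
  field_simp

theorem stmt15_general (N Q : ℕ) (hN : 3 ≤ N)
    (Nq : Fin Q → ℕ)
    (Y : Fin N → Fin Q → ℝ) (z : Fin N → Fin Q)
    (hz : ∀ q, (Finset.univ.filter fun i => z i = q).card = Nq q)
    (QU : Finset (Fin Q)) (hQU : ∀ q ∈ QU, Nq q = 1)
    (G : Finset (Finset (Fin Q)))
    (hGsub : ∀ g ∈ G, g ⊆ QU) (hGcard : ∀ g ∈ G, 2 ≤ g.card)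
    (hS : ∀ q ∈ QU, 0 < Svar Y q q) :
    (∀ g ∈ G, pexp (fun π => Yhatg Y z π g) = Ybarg Y g) ∧
    (∀ g ∈ G, (0 : ℝ) ≤ (N : ℝ) - rhoG Y g - ((g.card : ℝ) - 1) →
      ∀ q ∈ g,
        ((0 : ℝ) ≤ muG N g * ((g.card : ℝ) ^ 2)⁻¹
              * (1 - rhoG Y g / (N : ℝ) - ((g.card : ℝ) - 1) / (N : ℝ))
              * (∑ q' ∈ g.erase q, Svar Y q' q')) ∧
        Svar Y q q
            + muG N g * ((g.card : ℝ) ^ 2)⁻¹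
              * (1 - rhoG Y g / (N : ℝ) - ((g.card : ℝ) - 1) / (N : ℝ))
              * (∑ q' ∈ g.erase q, Svar Y q' q')
            + muG N g * (Ybar Y q - Ybarg Y g) ^ 2
          ≤ pexp (fun π => muG N g * (Yobs Y z π q - Yhatg Y z π g) ^ 2)) := by
  have hsingle : ∀ g ∈ G, ∀ a ∈ g, (univ.filter fun i => z i = a).card = 1 :=
    fun g hg a ha => (hz a).trans (hQU a (hGsub g hg ha))
  refine ⟨fun g hg => pexp_Yhatg Y z (hsingle g hg), fun g hg hρ q hq => ?_⟩
  have hSg : ∀ a ∈ g.erase q, 0 < Svar Y a a :=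
    fun a ha => hS a (hGsub g hg (Finset.mem_of_mem_erase ha))
  have hΩ : 0 ≤ 1 - rhoG Y g / N - ((g.card : ℝ) - 1) / N := by
    have hN0 : (N : ℝ) ≠ 0 := by positivity
    rw [show 1 - rhoG Y g / N - ((g.card : ℝ) - 1) / N = (N - rhoG Y g - (g.card - 1)) / N by
      field_simp]
    exact div_nonneg hρ N.cast_nonneg
  have hμ := muG_pos hN (hGcard g hg)
  refine ⟨mul_nonneg (mul_nonneg (mul_nonneg hμ.le (by positivity)) hΩ)
    (Finset.sum_nonneg fun a ha => (hSg a ha).le), ?_⟩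
  have hB := div_le_div_of_nonneg_right
    (covQuad_deviationContrast_le_rhoG Y (by omega) hq hSg) N.cast_nonneg
  rw [pexp_const_mul, pexp_sq_Yobs_sub_Yhatg Y z (by omega) (hsingle g hg) hq]
  linear_combination
    mul_le_mul_of_nonneg_left hB hμ.le - Svar Y q q * muG_mul_eq_one hN (hGcard g hg)

/-- Lemma 1: sample mean and variance estimator under grouping for unreplicated arms. -/
theorem stmt15 (N Q : ℕ) (hN : 3 ≤ N) (hQ : 1 ≤ Q)
    (Nq : Fin Q → ℕ) (hNq : ∀ q, 1 ≤ Nq q) (hsum : (∑ q, Nq q) = N)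
    (Y : Fin N → Fin Q → ℝ) (z : Fin N → Fin Q)
    (hz : ∀ q, (Finset.univ.filter fun i => z i = q).card = Nq q)
    (QU : Finset (Fin Q)) (hQU : ∀ q ∈ QU, Nq q = 1)
    (G : Finset (Finset (Fin Q)))
    (hGsub : ∀ g ∈ G, g ⊆ QU) (hGcard : ∀ g ∈ G, 2 ≤ g.card)
    (hGdisj : ∀ g ∈ G, ∀ g' ∈ G, g ≠ g' → Disjoint g g')
    (hGunion : G.biUnion id = QU)
    (hS : ∀ q ∈ QU, 0 < Svar Y q q) :
    (∀ g ∈ G, pexp (fun π => Yhatg Y z π g) = Ybarg Y g) ∧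
    (∀ g ∈ G, (0 : ℝ) ≤ (N : ℝ) - rhoG Y g - ((g.card : ℝ) - 1) →
      ∀ q ∈ g,
        ((0 : ℝ) ≤ muG N g * ((g.card : ℝ) ^ 2)⁻¹
              * (1 - rhoG Y g / (N : ℝ) - ((g.card : ℝ) - 1) / (N : ℝ))
              * (∑ q' ∈ g.erase q, Svar Y q' q')) ∧
        Svar Y q q
            + muG N g * ((g.card : ℝ) ^ 2)⁻¹
              * (1 - rhoG Y g / (N : ℝ) - ((g.card : ℝ) - 1) / (N : ℝ))
              * (∑ q' ∈ g.erase q, Svar Y q' q')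
            + muG N g * (Ybar Y q - Ybarg Y g) ^ 2
          ≤ pexp (fun π => muG N g * (Yobs Y z π q - Yhatg Y z π g) ^ 2)) :=
  stmt15_general N Q hN Nq Y z hz QU hQU G hGsub hGcard hS
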